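/- arXiv:2602.22810 — 3 statements merged into one kernel-verified Lean document; each statement's English description precedes it below -/
import Mathlib

section
/- Let $\{X_k\}_{k=1}^K$ be a sequence of random variables adapted so that $X_1,\dots,X_{k-1}$ are $\mathcal{F}_k$-measurable, with $0 \le X_k \le 1$ almost surely. Then with probability at least $1-\delta$, simultaneously for all $k \in [K]$, $\sum_{s=1}^k X_s \le 2\sum_{s=1}^k \mathbb{E}[X_s \mid \mathcal{F}_s] + \log(1/\delta)$. -/
/-!
On `[0, 1]` the exponential lies below its chord, `eˣ ≤ 1 + (e - 1) x ≤ e^{2x}`, so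
`E[exp X_k | ℱ_k] ≤ exp (2 E[X_k | ℱ_k])`. Hence `Y_k = exp (∑_{s ≤ k} (X_s - 2 E[X_s | ℱ_s]))`,
adapted to the shifted filtration `ℱ_{k+1}`, is a nonnegative supermartingale with `Y_0 = 1`.
Ville's maximal inequality, proved by optional stopping at the first time `Y ≥ 1/δ`, bounds the
probability that `Y_k ≥ 1/δ` for some `k ≤ K` by `δ`; outside that event taking logarithms gives
the claim.
-/

open MeasureTheory

theorem Real.exp_le_one_add_mul_of_mem_Icc {x : ℝ} (hx : x ∈ Set.Icc (0 : ℝ) 1) :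
    Real.exp x ≤ 1 + (Real.exp 1 - 1) * x := by
  have h := convexOn_exp.2 (Set.mem_univ 0) (Set.mem_univ 1) (sub_nonneg.2 hx.2) hx.1
    (sub_add_cancel 1 x)
  simp only [smul_eq_mul, mul_zero, mul_one, zero_add, Real.exp_zero] at h
  linarith

namespace MeasureTheory

variable {Ω : Type*} {m m0 : MeasurableSpace Ω} {μ : Measure Ω}

theorem condExp_exp_le_exp_two_mul_condExp [IsFiniteMeasure μ] (hm : m ≤ m0) {Z : Ω → ℝ}
    (hZm : AEStronglyMeasurable Z μ) (hZ : ∀ᵐ ω ∂μ, Z ω ∈ Set.Icc (0 : ℝ) 1) :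
    μ[fun ω => Real.exp (Z ω) | m] ≤ᵐ[μ] fun ω => Real.exp (2 * μ[Z | m] ω) := by
  have hZint : Integrable Z μ := .of_bound hZm 1 <| by
    filter_upwards [hZ] with ω hω
    rw [Real.norm_eq_abs, abs_le]
    exact ⟨by linarith [hω.1], hω.2⟩
  have hexpint : Integrable (fun ω => Real.exp (Z ω)) μ :=
    .of_bound (Real.continuous_exp.comp_aestronglyMeasurable hZm) (Real.exp 1) <| by
      filter_upwards [hZ] with ω hω
      rw [Real.norm_eq_abs, abs_of_pos (Real.exp_pos _)]
      exact Real.exp_le_exp.2 hω.2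
  have hchord : μ[fun ω => Real.exp (Z ω) | m] ≤ᵐ[μ]
      μ[(fun _ => (1 : ℝ)) + (Real.exp 1 - 1) • Z | m] := by
    refine condExp_mono hexpint ((integrable_const 1).add (hZint.smul _)) ?_
    filter_upwards [hZ] with ω hω
    exact Real.exp_le_one_add_mul_of_mem_Icc hω
  have haffine : μ[(fun _ => (1 : ℝ)) + (Real.exp 1 - 1) • Z | m] =ᵐ[μ]
      (fun _ => (1 : ℝ)) + (Real.exp 1 - 1) • μ[Z | m] := by
    filter_upwards [condExp_add (m := m) (integrable_const (1 : ℝ)) (hZint.smul (Real.exp 1 - 1)),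
      condExp_smul (m := m) (Real.exp 1 - 1) Z] with ω hadd hsmul
    rw [hadd, Pi.add_apply, hsmul, condExp_const hm]
    rfl
  filter_upwards [hchord, haffine, condExp_nonneg (m := m) (hZ.mono fun ω hω => hω.1)]
    with ω hchord haffine hnonneg
  have he : Real.exp 1 - 1 ≤ 2 := by linarith [Real.exp_one_lt_three]
  calc μ[fun ω => Real.exp (Z ω) | m] ω
      ≤ 1 + (Real.exp 1 - 1) * μ[Z | m] ω := by simpa [haffine] using hchord
    _ ≤ Real.exp ((Real.exp 1 - 1) * μ[Z | m] ω) := by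
      linarith [Real.add_one_le_exp ((Real.exp 1 - 1) * μ[Z | m] ω)]
    _ ≤ Real.exp (2 * μ[Z | m] ω) := Real.exp_le_exp.2 (mul_le_mul_of_nonneg_right he hnonneg)

def Filtration.shift (ℱ : Filtration ℕ m0) : Filtration ℕ m0 where
  seq n := ℱ (n + 1)
  mono' _ _ hij := ℱ.mono (Nat.succ_le_succ hij)
  le' n := ℱ.le (n + 1)

noncomputable def expSumSubTwoCondExp (μ : Measure Ω) (𝒢 : Filtration ℕ m0) (W : ℕ → Ω → ℝ)
    (n : ℕ) (ω : Ω) : ℝ :=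
  Real.exp (∑ i ∈ Finset.range n, (W (i + 1) ω - 2 * μ[W (i + 1) | 𝒢 i] ω))

section expSumSubTwoCondExp

variable {𝒢 : Filtration ℕ m0} {W : ℕ → Ω → ℝ}

@[simp]
theorem expSumSubTwoCondExp_zero : expSumSubTwoCondExp μ 𝒢 W 0 = 1 := by
  ext ω
  simp [expSumSubTwoCondExp]

theorem expSumSubTwoCondExp_pos (n : ℕ) (ω : Ω) : 0 < expSumSubTwoCondExp μ 𝒢 W n ω :=
  Real.exp_pos _

theorem expSumSubTwoCondExp_succ (n : ℕ) (ω : Ω) :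
    expSumSubTwoCondExp μ 𝒢 W (n + 1) ω =
      expSumSubTwoCondExp μ 𝒢 W n ω * Real.exp (-(2 * μ[W (n + 1) | 𝒢 n] ω)) *
        Real.exp (W (n + 1) ω) := by
  simp only [expSumSubTwoCondExp, Finset.sum_range_succ, Real.exp_add, sub_eq_add_neg]
  ring

theorem stronglyAdapted_expSumSubTwoCondExp (hW : StronglyAdapted 𝒢 W) :
    StronglyAdapted 𝒢 (expSumSubTwoCondExp μ 𝒢 W) := fun _ =>
  Real.continuous_exp.comp_stronglyMeasurable <| Finset.stronglyMeasurable_fun_sum _ fun i hi =>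
    ((hW (i + 1)).mono (𝒢.mono (Finset.mem_range.1 hi))).sub
      ((stronglyMeasurable_condExp.mono (𝒢.mono (Finset.mem_range.1 hi).le)).const_mul 2)

theorem expSumSubTwoCondExp_le_exp (hbdd : ∀ n, ∀ᵐ ω ∂μ, W n ω ∈ Set.Icc (0 : ℝ) 1) (n : ℕ) :
    ∀ᵐ ω ∂μ, expSumSubTwoCondExp μ 𝒢 W n ω ≤ Real.exp n := by
  have hcond : ∀ i, ∀ᵐ ω ∂μ, 0 ≤ μ[W (i + 1) | 𝒢 i] ω := fun i =>
    condExp_nonneg ((hbdd (i + 1)).mono fun ω hω => hω.1)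
  filter_upwards [ae_all_iff.2 hbdd, ae_all_iff.2 hcond] with ω hW hT
  refine Real.exp_le_exp.2 ?_
  calc ∑ i ∈ Finset.range n, (W (i + 1) ω - 2 * μ[W (i + 1) | 𝒢 i] ω)
      ≤ ∑ i ∈ Finset.range n, (1 : ℝ) :=
        Finset.sum_le_sum fun i _ => by linarith [(hW (i + 1)).2, hT i]
    _ = n := by simp

theorem supermartingale_expSumSubTwoCondExp [IsFiniteMeasure μ] (hW : StronglyAdapted 𝒢 W)
    (hbdd : ∀ n, ∀ᵐ ω ∂μ, W n ω ∈ Set.Icc (0 : ℝ) 1) :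
    Supermartingale (expSumSubTwoCondExp μ 𝒢 W) 𝒢 μ := by
  set Y := expSumSubTwoCondExp μ 𝒢 W
  have hYadapt := stronglyAdapted_expSumSubTwoCondExp (μ := μ) hW
  have hYint : ∀ n, Integrable (Y n) μ := fun n =>
    .of_bound ((hYadapt n).mono (𝒢.le n)).aestronglyMeasurable (Real.exp n) <| by
      filter_upwards [expSumSubTwoCondExp_le_exp (𝒢 := 𝒢) hbdd n] with ω hω
      rwa [Real.norm_eq_abs, abs_of_pos (expSumSubTwoCondExp_pos n ω)]
  refine supermartingale_nat hYadapt hYint fun n => ?_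
  set T := μ[W (n + 1) | 𝒢 n]
  set f : Ω → ℝ := fun ω => Y n ω * Real.exp (-(2 * T ω))
  set g : Ω → ℝ := fun ω => Real.exp (W (n + 1) ω)
  have hfactor : Y (n + 1) = f * g := funext (expSumSubTwoCondExp_succ n)
  have hf : StronglyMeasurable[𝒢 n] f := (hYadapt n).mul <|
    Real.continuous_exp.comp_stronglyMeasurable (stronglyMeasurable_condExp.const_mul 2).neg
  have hg : Integrable g μ := .of_bound
    (Real.continuous_exp.comp_aestronglyMeasurable
      ((hW (n + 1)).mono (𝒢.le _)).aestronglyMeasurable) (Real.exp 1) <| by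
    filter_upwards [hbdd (n + 1)] with ω hω
    rw [Real.norm_eq_abs, abs_of_pos (Real.exp_pos _)]
    exact Real.exp_le_exp.2 hω.2
  have hpull : μ[Y (n + 1) | 𝒢 n] =ᵐ[μ] f * μ[g | 𝒢 n] := by
    rw [hfactor]
    exact condExp_mul_of_stronglyMeasurable_left hf (hfactor ▸ hYint (n + 1)) hg
  filter_upwards [hpull, condExp_exp_le_exp_two_mul_condExp (𝒢.le n)
    ((hW (n + 1)).mono (𝒢.le _)).aestronglyMeasurable (hbdd (n + 1))] with ω hpull hexp
  calc μ[Y (n + 1) | 𝒢 n] ω = f ω * μ[g | 𝒢 n] ω := hpull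
    _ ≤ f ω * Real.exp (2 * T ω) := by
      gcongr
      exact mul_nonneg (expSumSubTwoCondExp_pos n ω).le (Real.exp_pos _).le
    _ = Y n ω := by
      simp only [f, mul_assoc, ← Real.exp_add, neg_add_cancel, Real.exp_zero, mul_one]

end expSumSubTwoCondExp

theorem Supermartingale.maximal_ineq [IsFiniteMeasure μ] {𝒢 : Filtration ℕ m0} {Y : ℕ → Ω → ℝ}
    (hY : Supermartingale Y 𝒢 μ) (hnonneg : ∀ n, 0 ≤ᵐ[μ] Y n) (c : ℝ) (n : ℕ) :
    c * μ.real {ω | ∃ j ≤ n, c ≤ Y j ω} ≤ ∫ ω, Y 0 ω ∂μ := by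
  set τ : Ω → ℕ∞ := fun ω => (hittingBtwn Y (Set.Ici c) 0 n ω : ℕ)
  have hτ : IsStoppingTime 𝒢 τ :=
    hY.stronglyAdapted.adapted.isStoppingTime_hittingBtwn measurableSet_Ici
  have hτle : ∀ ω, τ ω ≤ n := fun ω => ENat.natCast_le_natCast.2 (hittingBtwn_le ω)
  have hint : Integrable (stoppedValue Y τ) μ := integrable_stoppedValue ℕ hτ hY.integrable hτle
  have hA : MeasurableSet {ω | ∃ j ≤ n, c ≤ Y j ω} := by
    have hunion : {ω | ∃ j ≤ n, c ≤ Y j ω} = ⋃ j ≤ n, {ω | c ≤ Y j ω} := by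
      ext; simp
    rw [hunion]
    exact .biUnion (Set.to_countable _) fun j _ =>
      measurableSet_le measurable_const ((hY.stronglyMeasurable j).measurable.mono (𝒢.le j) le_rfl)
  have hstop : ∫ ω, stoppedValue Y τ ω ∂μ ≤ ∫ ω, Y 0 ω ∂μ := by
    have := hY.neg.expected_stoppedValue_mono (isStoppingTime_const 𝒢 0) hτ (fun _ => zero_le) hτle
    simpa [stoppedValue, integral_neg] using this
  calc c * μ.real {ω | ∃ j ≤ n, c ≤ Y j ω}
      ≤ ∫ ω in {ω | ∃ j ≤ n, c ≤ Y j ω}, stoppedValue Y τ ω ∂μ :=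
        setIntegral_ge_of_const_le_real hA (measure_ne_top _ _)
          (fun ω ⟨j, hjn, hj⟩ => stoppedValue_hittingBtwn_mem ⟨j, ⟨zero_le, hjn⟩, hj⟩)
          hint.integrableOn
    _ ≤ ∫ ω, stoppedValue Y τ ω ∂μ := setIntegral_le_integral hint <| by
        filter_upwards [ae_all_iff.2 hnonneg] with ω hω using hω _
    _ ≤ ∫ ω, Y 0 ω ∂μ := hstop

end MeasureTheory

theorem stmt0 {Ω : Type*} {m0 : MeasurableSpace Ω} (μ : Measure Ω) [IsProbabilityMeasure μ]
    (ℱ : Filtration ℕ m0) (K : ℕ) (X : ℕ → Ω → ℝ)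
    (hadapt : ∀ k s, s < k → StronglyMeasurable[ℱ k] (X s))
    (hbdd : ∀ k, ∀ᵐ ω ∂μ, 0 ≤ X k ω ∧ X k ω ≤ 1)
    (δ : ℝ) (hδ : δ ∈ Set.Ioo (0:ℝ) 1) :
    ENNReal.ofReal (1 - δ) ≤
      μ {ω | ∀ k ∈ Finset.Icc 1 K,
        ∑ s ∈ Finset.Icc 1 k, X s ω
          ≤ 2 * ∑ s ∈ Finset.Icc 1 k, (μ[X s | ℱ s]) ω + Real.log (1 / δ)} := by
  set Y := expSumSubTwoCondExp μ ℱ.shift X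
  have hY : Supermartingale Y ℱ.shift μ :=
    supermartingale_expSumSubTwoCondExp (fun n => hadapt (n + 1) n n.lt_succ_self) hbdd
  obtain ⟨hδ0, -⟩ := hδ
  set bad := {ω | ∃ j ≤ K, δ⁻¹ ≤ Y j ω}
  have hbad : μ bad ≤ ENNReal.ofReal δ := by
    have hville := hY.maximal_ineq
      (fun n => ae_of_all _ fun ω => (expSumSubTwoCondExp_pos n ω).le) δ⁻¹ K
    simp only [Y, expSumSubTwoCondExp_zero, Pi.one_apply, integral_const, probReal_univ,
      smul_eq_mul, mul_one, inv_mul_le_iff₀ hδ0] at hville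
    rw [← ofReal_measureReal]
    exact ENNReal.ofReal_le_ofReal hville
  have hgood : badᶜ ⊆ {ω | ∀ k ∈ Finset.Icc 1 K,
        ∑ s ∈ Finset.Icc 1 k, X s ω
          ≤ 2 * ∑ s ∈ Finset.Icc 1 k, (μ[X s | ℱ s]) ω + Real.log (1 / δ)} := by
    intro ω hω k hk
    have hYk : Y k ω < δ⁻¹ := not_le.1 fun h => hω ⟨k, (Finset.mem_Icc.1 hk).2, h⟩
    have hlog := (Real.lt_log_iff_exp_lt (inv_pos.2 hδ0)).2 hYk
    have hsum : ∀ f : ℕ → ℝ, ∑ s ∈ Finset.Icc 1 k, f s = ∑ i ∈ Finset.range k, f (i + 1) :=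
      fun f => by rw [Finset.range_eq_Ico, Finset.sum_Ico_add' f 0 k 1]; rfl
    rw [hsum, hsum, Finset.mul_sum, ← sub_le_iff_le_add', ← Finset.sum_sub_distrib, one_div]
    exact hlog.le
  calc ENNReal.ofReal (1 - δ) = 1 - ENNReal.ofReal δ := by
        rw [ENNReal.ofReal_sub _ hδ0.le, ENNReal.ofReal_one]
    _ ≤ μ Set.univ - μ bad := by rw [measure_univ]; gcongr
    _ ≤ μ badᶜ := Set.compl_eq_univ_sdiff bad ▸ le_measure_sdiff
    _ ≤ _ := measure_mono hgood
end

section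
/- (Feature-level change of measure.) Let $W: \mathcal{X} \to [0, W_{\max}]$ be any nonnegative function. Under the linear Markov game assumption (transition kernel of the form $P(x'|x,a,\pi^{-n}_E) = \phi(x,a)^\top M(x')$ with $\|\sum_x M(x) W(x)\| \le B W_{\max}$), for any deviation policy $\pi^n_\star$: $\sum_{h=1}^H \mathbb{E}_{X \sim \nu_h^{\pi^n_\star, \pi^{-n}_E}}[W(X)] \le \sum_{h=1}^H \|\phi_{h-1}^{\pi^n_\star, \pi^{-n}_E}\|_{(\Lambda^n_{E,h-1})^{-1}} \sqrt{\mathbb{E}_{X \sim \nu_h^{\pi_E}}[W^2(X)] + \lambda B^2 W_{\max}^2}$. -/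
/-!
Write `θ = ∑ₓ M(x) W(x)` and `u` for the deviation's feature expectation. Linearity of the kernel
turns the expected value of `W` one step ahead into `u ⬝ θ`, and Cauchy–Schwarz in the geometry of
the regularized expert covariance `Λ` bounds this by `‖u‖_{Λ⁻¹} ‖θ‖_Λ`. Finally
`‖θ‖_Λ² = λ‖θ‖² + 𝔼_E[(φ ⬝ θ)²]`, where `λ‖θ‖² ≤ λB²W_max²` and, by Jensen applied to each row of the
kernel, `(φ(x', a) ⬝ θ)² ≤ 𝔼_{x ∼ P(·|x', a)}[W(x)²]`, which sums to the expert's second moment one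
step ahead.
-/

open Matrix

section PosDefForm

variable {n : Type*} [Fintype n]

theorem Matrix.PosSemidef.sq_dotProduct_mulVec_le {Λ : Matrix n n ℝ} (hΛ : Λ.PosSemidef)
    (x y : n → ℝ) : (x ⬝ᵥ (Λ *ᵥ y)) ^ 2 ≤ (x ⬝ᵥ (Λ *ᵥ x)) * (y ⬝ᵥ (Λ *ᵥ y)) := by
  let := Λ.toSeminormedAddCommGroup hΛ
  let := Λ.toInnerProductSpace hΛ
  have inner_eq (u v : n → ℝ) : inner ℝ u v = u ⬝ᵥ (Λ *ᵥ v) := by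
    change (Λ *ᵥ v) ⬝ᵥ star u = _
    rw [star_trivial, dotProduct_comm]
  simpa only [inner_eq, sq] using real_inner_mul_inner_self_le x y

theorem Matrix.PosDef.dotProduct_le_sqrt_mul_sqrt [DecidableEq n] {Λ : Matrix n n ℝ}
    (hΛ : Λ.PosDef) (u θ : n → ℝ) :
    u ⬝ᵥ θ ≤ √(u ⬝ᵥ (Λ⁻¹ *ᵥ u)) * √(θ ⬝ᵥ (Λ *ᵥ θ)) := by
  set v := Λ⁻¹ *ᵥ u
  have hΛv : Λ *ᵥ v = u := by
    rw [mulVec_mulVec, mul_nonsing_inv _ ((isUnit_iff_isUnit_det Λ).mp hΛ.isUnit), one_mulVec]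
  have hcs := hΛ.posSemidef.sq_dotProduct_mulVec_le θ v
  rw [hΛv, dotProduct_comm v u, dotProduct_comm θ u, mul_comm] at hcs
  have hv : 0 ≤ u ⬝ᵥ v := by simpa using hΛ.inv.posSemidef.dotProduct_mulVec_nonneg u
  calc u ⬝ᵥ θ ≤ |u ⬝ᵥ θ| := le_abs_self _
    _ ≤ √((u ⬝ᵥ v) * (θ ⬝ᵥ (Λ *ᵥ θ))) := Real.abs_le_sqrt hcs
    _ = √(u ⬝ᵥ v) * √(θ ⬝ᵥ (Λ *ᵥ θ)) := Real.sqrt_mul hv _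

end PosDefForm

section LinearKernel

variable {X A ι : Type*} [Fintype X] [Fintype A] [Fintype ι]

theorem sum_kernel_mul_eq (P : X → A → X → ℝ) (w : X → A → ℝ) (f : X → ℝ) :
    ∑ x, (∑ x', ∑ a, P x' a x * w x' a) * f x = ∑ x', ∑ a, w x' a * ∑ x, P x' a x * f x := by
  simp only [Finset.sum_mul, Finset.mul_sum]
  rw [Finset.sum_comm]
  refine Finset.sum_congr rfl fun x' _ => ?_
  rw [Finset.sum_comm]
  exact Finset.sum_congr rfl fun a _ => Finset.sum_congr rfl fun x _ => by ring

theorem sum_dotProduct_mul (v : ι → ℝ) (M : X → ι → ℝ) (f : X → ℝ) :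
    ∑ x, (v ⬝ᵥ M x) * f x = v ⬝ᵥ fun i => ∑ x, M x i * f x := by
  simp only [dotProduct, Finset.sum_mul, Finset.mul_sum]
  rw [Finset.sum_comm]
  exact Finset.sum_congr rfl fun i _ => Finset.sum_congr rfl fun x _ => by ring

theorem sum_mul_dotProduct (w : X → A → ℝ) (φ : X → A → ι → ℝ) (θ : ι → ℝ) :
    ∑ x', ∑ a, w x' a * (φ x' a ⬝ᵥ θ) = (fun i => ∑ x', ∑ a, w x' a * φ x' a i) ⬝ᵥ θ := by
  simp only [dotProduct, Finset.mul_sum, Finset.sum_mul]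
  conv_rhs => rw [Finset.sum_comm]
  refine Finset.sum_congr rfl fun x' _ => ?_
  rw [Finset.sum_comm]
  exact Finset.sum_congr rfl fun a _ => Finset.sum_congr rfl fun i _ => by ring

def regularizedCov [DecidableEq ι] (lam : ℝ) (c : X → A → ℝ) (φ : X → A → ι → ℝ) :
    Matrix ι ι ℝ :=
  lam • 1 + ∑ x', ∑ a, c x' a • vecMulVec (φ x' a) (φ x' a)

theorem dotProduct_regularizedCov_mulVec [DecidableEq ι] (lam : ℝ) (c : X → A → ℝ)
    (φ : X → A → ι → ℝ) (θ : ι → ℝ) :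
    θ ⬝ᵥ (regularizedCov lam c φ *ᵥ θ)
      = lam * (θ ⬝ᵥ θ) + ∑ x', ∑ a, c x' a * (φ x' a ⬝ᵥ θ) ^ 2 := by
  simp only [regularizedCov, add_mulVec, sum_mulVec, smul_mulVec, one_mulVec, vecMulVec_mulVec, dotProduct_add,
    dotProduct_sum, dotProduct_smul, op_smul_eq_smul, smul_eq_mul]
  congr 1
  refine Finset.sum_congr rfl fun x' _ => Finset.sum_congr rfl fun a _ => ?_
  rw [dotProduct_comm θ]; ring

theorem posDef_regularizedCov [DecidableEq ι] {lam : ℝ} (hlam : 0 < lam) {c : X → A → ℝ}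
    (hc : ∀ x' a, 0 ≤ c x' a) (φ : X → A → ι → ℝ) : (regularizedCov lam c φ).PosDef := by
  refine (PosDef.one.smul hlam).add_posSemidef <| posSemidef_sum _ fun x' _ =>
    posSemidef_sum _ fun a _ => ?_
  simpa using (posSemidef_vecMulVec_self_star (φ x' a)).smul (hc x' a)

theorem sq_sum_mul_le_sum_mul_sq {p : X → ℝ} (hp0 : ∀ x, 0 ≤ p x) (hp1 : ∑ x, p x = 1)
    (f : X → ℝ) : (∑ x, p x * f x) ^ 2 ≤ ∑ x, p x * f x ^ 2 := by
  simpa using (even_two.convexOn_pow (𝕜 := ℝ)).map_sum_le (t := Finset.univ) (p := f)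
    (fun x _ => hp0 x) hp1 (fun _ _ => Set.mem_univ _)

theorem sum_mul_sq_dotProduct_le (φ : X → A → ι → ℝ) (M : X → ι → ℝ)
    (hP0 : ∀ x' a x, 0 ≤ φ x' a ⬝ᵥ M x) (hP1 : ∀ x' a, ∑ x, φ x' a ⬝ᵥ M x = 1)
    {c : X → A → ℝ} (hc : ∀ x' a, 0 ≤ c x' a) (f : X → ℝ) :
    ∑ x', ∑ a, c x' a * (φ x' a ⬝ᵥ fun i => ∑ x, M x i * f x) ^ 2
      ≤ ∑ x, (∑ x', ∑ a, (φ x' a ⬝ᵥ M x) * c x' a) * f x ^ 2 := by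
  rw [sum_kernel_mul_eq]
  gcongr with x' _ a _
  · exact hc x' a
  · rw [← sum_dotProduct_mul]
    exact sq_sum_mul_le_sum_mul_sq (hP0 x' a) (hP1 x' a) f

theorem occupancy_nonneg (P : X → A → X → ℝ) (hP : ∀ x' a x, 0 ≤ P x' a x)
    {π : ℕ → X → A → ℝ} (hπ : ∀ h x a, 0 ≤ π h x a) {ν : ℕ → X → ℝ} (hν0 : ∀ x, 0 ≤ ν 0 x)
    (hrec : ∀ h x, ν (h + 1) x = ∑ x', ∑ a, P x' a x * π h x' a * ν h x') :
    ∀ h x, 0 ≤ ν h x := by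
  intro h
  induction h with
  | zero => exact hν0
  | succ h ih =>
    intro x
    rw [hrec]
    exact Finset.sum_nonneg fun x' _ => Finset.sum_nonneg fun a _ =>
      mul_nonneg (mul_nonneg (hP x' a x) (hπ h x' a)) (ih x')

end LinearKernel

theorem stmt4_general {X A : Type*} [Fintype X] [Fintype A] {d : ℕ}
    (H : ℕ) (φ : X → A → Fin d → ℝ) (M : X → Fin d → ℝ)
    (W : X → ℝ) (Wmax B lam : ℝ) (hlam : 0 < lam)
    (hMnorm : Real.sqrt (∑ i, (∑ x, M x i * W x) ^ 2) ≤ B * Wmax)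
    (hker_nonneg : ∀ x' a x, 0 ≤ φ x' a ⬝ᵥ M x)
    (hker_sum : ∀ x' a, ∑ x, φ x' a ⬝ᵥ M x = 1)
    (πstar πE : ℕ → X → A → ℝ)
    (hπE0 : ∀ h x a, 0 ≤ πE h x a)
    (νdev νE : ℕ → X → ℝ)
    (hν0 : ∀ x, 0 ≤ νE 0 x)
    (hdev_rec : ∀ h x, νdev (h + 1) x
      = ∑ x', ∑ a, (φ x' a ⬝ᵥ M x) * πstar h x' a * νdev h x')
    (hE_rec : ∀ h x, νE (h + 1) x
      = ∑ x', ∑ a, (φ x' a ⬝ᵥ M x) * πE h x' a * νE h x') :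
    ∑ h ∈ Finset.range H, ∑ x, νdev (h + 1) x * W x
      ≤ ∑ h ∈ Finset.range H,
          Real.sqrt ((fun i => ∑ x', ∑ a, πstar h x' a * νdev h x' * φ x' a i) ⬝ᵥ
              ((lam • (1 : Matrix (Fin d) (Fin d) ℝ)
                  + ∑ x', ∑ a, (πE h x' a * νE h x') • vecMulVec (φ x' a) (φ x' a))⁻¹ *ᵥ
                (fun i => ∑ x', ∑ a, πstar h x' a * νdev h x' * φ x' a i)))
            * Real.sqrt ((∑ x, νE (h + 1) x * W x ^ 2) + lam * B ^ 2 * Wmax ^ 2) := by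
  have hνE := occupancy_nonneg (fun x' a x => φ x' a ⬝ᵥ M x) hker_nonneg hπE0 hν0 hE_rec
  have hθ : (fun i => ∑ x, M x i * W x) ⬝ᵥ (fun i => ∑ x, M x i * W x) ≤ B ^ 2 * Wmax ^ 2 := by
    rw [← mul_pow]
    simpa only [dotProduct, sq] using (Real.sqrt_le_iff.mp hMnorm).2
  refine Finset.sum_le_sum fun h _ => ?_
  rw [show lam • 1 + _ = regularizedCov lam (fun x' a => πE h x' a * νE h x') φ from rfl]
  have hcov := posDef_regularizedCov hlam (fun x' a => mul_nonneg (hπE0 h x' a) (hνE h x')) φ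
  calc ∑ x, νdev (h + 1) x * W x
      = (fun i => ∑ x', ∑ a, πstar h x' a * νdev h x' * φ x' a i)
          ⬝ᵥ fun i => ∑ x, M x i * W x := by
        conv_lhs => simp only [hdev_rec, mul_assoc]
        rw [sum_kernel_mul_eq]
        simp only [sum_dotProduct_mul]
        exact sum_mul_dotProduct (fun x' a => πstar h x' a * νdev h x') φ _
    _ ≤ _ := hcov.dotProduct_le_sqrt_mul_sqrt _ _
    _ ≤ _ := by
        gcongr
        have hmoment := sum_mul_sq_dotProduct_le φ M hker_nonneg hker_sum
          (fun x' a => mul_nonneg (hπE0 h x' a) (hνE h x')) W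
        rw [dotProduct_regularizedCov_mulVec]
        simp only [hE_rec, mul_assoc] at hmoment ⊢
        linarith [mul_le_mul_of_nonneg_left hθ hlam.le]

/-- Feature-level change of measure (Lemma: change_of_measure).
The opponent is frozen to the expert, giving the linear kernel
`P(x | x', a, π_E^{-n}) = φ(x',a) ⬝ M x`.  `νdev` is the occupancy of the
deviation `πstar` (against the expert opponent), `νE` the expert occupancy. -/
theorem stmt4 {X A : Type*} [Fintype X] [Fintype A] {d : ℕ}
    (H : ℕ) (φ : X → A → Fin d → ℝ) (M : X → Fin d → ℝ)
    (W : X → ℝ) (Wmax B lam : ℝ) (hlam : 0 < lam) (hB : 0 ≤ B)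
    (hW0 : ∀ x, 0 ≤ W x) (hW1 : ∀ x, W x ≤ Wmax)
    (hMnorm : Real.sqrt (∑ i, (∑ x, M x i * W x) ^ 2) ≤ B * Wmax)
    (hker_nonneg : ∀ x' a x, 0 ≤ φ x' a ⬝ᵥ M x)
    (hker_sum : ∀ x' a, ∑ x, φ x' a ⬝ᵥ M x = 1)
    (πstar πE : ℕ → X → A → ℝ)
    (hπstar0 : ∀ h x a, 0 ≤ πstar h x a) (hπstar1 : ∀ h x, ∑ a, πstar h x a = 1)
    (hπE0 : ∀ h x a, 0 ≤ πE h x a) (hπE1 : ∀ h x, ∑ a, πE h x a = 1)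
    (νdev νE : ℕ → X → ℝ)
    (hinit : νdev 0 = νE 0) (hν0 : ∀ x, 0 ≤ νE 0 x) (hν1 : ∑ x, νE 0 x = 1)
    (hdev_rec : ∀ h x, νdev (h + 1) x
      = ∑ x', ∑ a, (φ x' a ⬝ᵥ M x) * πstar h x' a * νdev h x')
    (hE_rec : ∀ h x, νE (h + 1) x
      = ∑ x', ∑ a, (φ x' a ⬝ᵥ M x) * πE h x' a * νE h x') :
    ∑ h ∈ Finset.range H, ∑ x, νdev (h + 1) x * W x
      ≤ ∑ h ∈ Finset.range H,
          Real.sqrt ((fun i => ∑ x', ∑ a, πstar h x' a * νdev h x' * φ x' a i) ⬝ᵥ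
              ((lam • (1 : Matrix (Fin d) (Fin d) ℝ)
                  + ∑ x', ∑ a, (πE h x' a * νE h x') • vecMulVec (φ x' a) (φ x' a))⁻¹ *ᵥ
                (fun i => ∑ x', ∑ a, πstar h x' a * νdev h x' * φ x' a i)))
            * Real.sqrt ((∑ x, νE (h + 1) x * W x ^ 2) + lam * B ^ 2 * Wmax ^ 2) :=
  stmt4_general H φ M W Wmax B lam hlam hMnorm hker_nonneg hker_sum πstar πE hπE0 νdev νE hν0
    hdev_rec hE_rec
end

section
/- Under the conditions of the feature-level change-of-measure lemma, the covariance-weighted norm of the transition-weighted function vector satisfies $\|\sum_{x} M(x) W(x)\|^2_{\Lambda^n_{E,h-1}} \le \mathbb{E}_{X \sim \nu_h^{\pi_E}}[W^2(X)] + \lambda B^2 W_{\max}^2$, where the proof uses Jensen's inequality applied to $(\sum_x P(x|x',a,\pi^{-n}_E) W(x))^2 \le \sum_x P(x|x',a,\pi^{-n}_E) W^2(x)$. -/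
/-!
Write `v = ∑ₓ W(x) M(x)`. Expanding the quadratic form of `Λ = λ I + ∑ π ν φ φᵀ` gives
`λ ‖v‖² + ∑_{x',a} π ν (φ(x',a) ⬝ v)²`. The first term is at most `λ B² W_max²`. In the second,
the linear-MDP identity `φ(x',a) ⬝ M(x) = P(x | x',a)` turns `φ(x',a) ⬝ v` into the conditional
expectation `∑ₓ P(x | x',a) W(x)`, whose square is bounded by `∑ₓ P(x | x',a) W(x)²` (Jensen);
averaging over `(x', a)` pushes `ν_{h-1}` forward to `ν_h`.
-/

open Matrix

section QuadraticForm

variable {n R : Type*} [Fintype n] [CommRing R]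

theorem dotProduct_vecMulVec_self_mulVec (u v : n → R) :
    v ⬝ᵥ (vecMulVec u u *ᵥ v) = (u ⬝ᵥ v) ^ 2 := by
  rw [vecMulVec_mulVec, op_smul_eq_smul, dotProduct_smul, smul_eq_mul, dotProduct_comm, sq]

theorem dotProduct_regularized_gram_mulVec [DecidableEq n] {ι κ : Type*} [Fintype ι] [Fintype κ]
    (lam : R) (c : ι → κ → R) (u : ι → κ → n → R) (v : n → R) :
    v ⬝ᵥ ((lam • (1 : Matrix n n R) + ∑ i, ∑ j, c i j • vecMulVec (u i j) (u i j)) *ᵥ v)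
      = lam * (v ⬝ᵥ v) + ∑ i, ∑ j, c i j * (u i j ⬝ᵥ v) ^ 2 := by
  simp only [add_mulVec, dotProduct_add, smul_mulVec, one_mulVec, sum_mulVec, dotProduct_sum,
    dotProduct_smul, smul_eq_mul, dotProduct_vecMulVec_self_mulVec]

end QuadraticForm

theorem sq_sum_mul_le_sum_mul_sq_s5 {𝕜 ι : Type*} [Field 𝕜] [LinearOrder 𝕜] [IsStrictOrderedRing 𝕜]
    (s : Finset ι) {w : ι → 𝕜} (f : ι → 𝕜) (hw0 : ∀ i ∈ s, 0 ≤ w i) (hw1 : ∑ i ∈ s, w i = 1) :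
    (∑ i ∈ s, w i * f i) ^ 2 ≤ ∑ i ∈ s, w i * f i ^ 2 := by
  simpa only [smul_eq_mul] using
    even_two.convexOn_pow.map_sum_le hw0 hw1 fun i _ => Set.mem_univ (f i)

theorem sum_sum_mul_sum_kernel_mul {R ι κ X : Type*} [CommSemiring R] [Fintype ι] [Fintype κ]
    [Fintype X] (c : ι → κ → R) (p : ι → κ → X → R) (g : X → R) :
    ∑ i, ∑ j, c i j * ∑ x, p i j x * g x = ∑ x, (∑ i, ∑ j, p i j x * c i j) * g x :=
  calc ∑ i, ∑ j, c i j * ∑ x, p i j x * g x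
      = ∑ i, ∑ x, ∑ j, p i j x * c i j * g x := by
        simp only [Finset.mul_sum]
        refine Fintype.sum_congr _ _ fun i => Finset.sum_comm.trans ?_
        exact Fintype.sum_congr _ _ fun x => Fintype.sum_congr _ _ fun j => by ring
    _ = ∑ x, (∑ i, ∑ j, p i j x * c i j) * g x := by
        rw [Finset.sum_comm]; simp only [Finset.sum_mul]

theorem stmt5_general {X A : Type*} [Fintype X] [Fintype A] {d : ℕ}
    (φ : X → A → Fin d → ℝ) (M : X → Fin d → ℝ) (p : X → A → X → ℝ)
    (hker : ∀ x' a x, φ x' a ⬝ᵥ M x = p x' a x)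
    (hp0 : ∀ x' a x, 0 ≤ p x' a x) (hp1 : ∀ x' a, ∑ x, p x' a x = 1)
    (W : X → ℝ) (Wmax B lam : ℝ) (hlam : 0 ≤ lam)
    (hMnorm : ∑ i, (∑ x, M x i * W x) ^ 2 ≤ B ^ 2 * Wmax ^ 2)
    (πE : X → A → ℝ) (hπE0 : ∀ x a, 0 ≤ πE x a)
    (νprev : X → ℝ) (hνprev0 : ∀ x, 0 ≤ νprev x)
    (νh : X → ℝ)
    (hν : ∀ x, νh x = ∑ x', ∑ a, p x' a x * πE x' a * νprev x') :
    (fun i => ∑ x, W x * M x i) ⬝ᵥ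
        ((lam • (1 : Matrix (Fin d) (Fin d) ℝ)
            + ∑ x', ∑ a, (πE x' a * νprev x') • vecMulVec (φ x' a) (φ x' a)) *ᵥ
          (fun i => ∑ x, W x * M x i))
      ≤ (∑ x, νh x * W x ^ 2) + lam * B ^ 2 * Wmax ^ 2 := by
  set v : Fin d → ℝ := fun i => ∑ x, W x * M x i
  have hv : v = ∑ x, W x • M x := by
    ext i
    simp only [v, Finset.sum_apply, Pi.smul_apply, smul_eq_mul]
  have hφv : ∀ x' a, φ x' a ⬝ᵥ v = ∑ x, p x' a x * W x := fun x' a => by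
    simp only [hv, dotProduct_sum, dotProduct_smul, smul_eq_mul, hker, mul_comm]
  have hvv : v ⬝ᵥ v ≤ B ^ 2 * Wmax ^ 2 := by
    simpa only [dotProduct, v, ← sq, mul_comm] using hMnorm
  rw [dotProduct_regularized_gram_mulVec]
  calc lam * (v ⬝ᵥ v) + ∑ x', ∑ a, πE x' a * νprev x' * (φ x' a ⬝ᵥ v) ^ 2
      ≤ lam * (B ^ 2 * Wmax ^ 2) + ∑ x', ∑ a, πE x' a * νprev x' * ∑ x, p x' a x * W x ^ 2 := by
        gcongr with x' _ a _
        · exact mul_nonneg (hπE0 x' a) (hνprev0 x')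
        · rw [hφv]
          exact sq_sum_mul_le_sum_mul_sq_s5 _ _ (fun x _ => hp0 x' a x) (hp1 x' a)
    _ = (∑ x, νh x * W x ^ 2) + lam * B ^ 2 * Wmax ^ 2 := by
        rw [sum_sum_mul_sum_kernel_mul (fun x' a => πE x' a * νprev x')]
        simp only [hν, mul_assoc]
        ring

/-- The covariance-weighted norm of the transition-weighted function vector is
bounded by the next-step expert expectation of `W²` plus the regularization term. -/
theorem stmt5 {X A : Type*} [Fintype X] [Fintype A] {d : ℕ}
    (φ : X → A → Fin d → ℝ) (M : X → Fin d → ℝ) (p : X → A → X → ℝ)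
    (hker : ∀ x' a x, φ x' a ⬝ᵥ M x = p x' a x)
    (hp0 : ∀ x' a x, 0 ≤ p x' a x) (hp1 : ∀ x' a, ∑ x, p x' a x = 1)
    (W : X → ℝ) (Wmax B lam : ℝ) (hlam : 0 ≤ lam)
    (hW0 : ∀ x, 0 ≤ W x) (hW1 : ∀ x, W x ≤ Wmax)
    (hMnorm : ∑ i, (∑ x, M x i * W x) ^ 2 ≤ B ^ 2 * Wmax ^ 2)
    (πE : X → A → ℝ) (hπE0 : ∀ x a, 0 ≤ πE x a)
    (νprev : X → ℝ) (hνprev0 : ∀ x, 0 ≤ νprev x)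
    (νh : X → ℝ)
    (hν : ∀ x, νh x = ∑ x', ∑ a, p x' a x * πE x' a * νprev x') :
    (fun i => ∑ x, W x * M x i) ⬝ᵥ
        ((lam • (1 : Matrix (Fin d) (Fin d) ℝ)
            + ∑ x', ∑ a, (πE x' a * νprev x') • vecMulVec (φ x' a) (φ x' a)) *ᵥ
          (fun i => ∑ x, W x * M x i))
      ≤ (∑ x, νh x * W x ^ 2) + lam * B ^ 2 * Wmax ^ 2 :=
  stmt5_general φ M p hker hp0 hp1 W Wmax B lam hlam hMnorm πE hπE0 νprev hνprev0 νh hν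
end
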